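/- arXiv:2512.09569 — 6 statements merged into one kernel-verified Lean document; each statement's English description precedes it below -/
import Mathlib

section
/- Let (f, ξ, Γ, h, S) be an equiaffine immersion datum on U with conormal map ν. Then for every x ∈ U and every Y ∈ ℝⁿ one has (Dν(x)(Y))(ξ(x)) = 0 and (Dν(x)(Y))(Df(x)(X)) = −h(x)(Y)(X) for all X ∈ ℝⁿ. In particular, if the bilinear form h(x) is nondegenerate, then the linear map Dν(x) : ℝⁿ → (ℝ^{n+1})* is injective (so ν is an immersion at x). -/
open Matrix

/-- For an equiaffine immersion datum `(f, ξ, Γ, h, S)` on an open set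
`U ⊆ ℝⁿ` with conormal map `ν`, the derivative of `ν` annihilates `ξ`, pairs with the
derivative of `f` via `-h`, and is injective whenever `h x` is nondegenerate. -/
theorem stmt_0 (n : ℕ) (hn : 1 ≤ n) (U : Set (Fin n → ℝ)) (hU : IsOpen U)
    (f ξ : (Fin n → ℝ) → (Fin (n + 1) → ℝ))
    (Γ : (Fin n → ℝ) → (Fin n → ℝ) →L[ℝ] (Fin n → ℝ) →L[ℝ] (Fin n → ℝ))
    (h : (Fin n → ℝ) → (Fin n → ℝ) →L[ℝ] (Fin n → ℝ) →L[ℝ] ℝ)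
    (S : (Fin n → ℝ) → (Fin n → ℝ) →L[ℝ] (Fin n → ℝ))
    (ν : (Fin n → ℝ) → (Fin (n + 1) → ℝ) →L[ℝ] ℝ)
    (hf : ContDiffOn ℝ (⊤ : ℕ∞) f U) (hξ : ContDiffOn ℝ (⊤ : ℕ∞) ξ U)
    (hΓ : ContDiffOn ℝ (⊤ : ℕ∞) Γ U) (hh : ContDiffOn ℝ (⊤ : ℕ∞) h U)
    (hS : ContDiffOn ℝ (⊤ : ℕ∞) S U) (hν : ContDiffOn ℝ (⊤ : ℕ∞) ν U)
    -- structure equation (SE1)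
    (SE1 : ∀ x ∈ U, ∀ X Y : Fin n → ℝ,
      fderiv ℝ (fun z => fderiv ℝ f z Y) x X
        = fderiv ℝ f x (Γ x X Y) + h x X Y • ξ x)
    -- structure equation (SE2)
    (SE2 : ∀ x ∈ U, ∀ X : Fin n → ℝ, fderiv ℝ ξ x X = - fderiv ℝ f x (S x X))
    -- conormal map conditions
    (hν1 : ∀ x ∈ U, ν x (ξ x) = 1)
    (hν2 : ∀ x ∈ U, ∀ Z : Fin n → ℝ, ν x (fderiv ℝ f x Z) = 0) :
    ∀ x ∈ U,
      (∀ Y : Fin n → ℝ,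
        fderiv ℝ ν x Y (ξ x) = 0 ∧
        ∀ X : Fin n → ℝ, fderiv ℝ ν x Y (fderiv ℝ f x X) = - h x Y X) ∧
      ((∀ Y : Fin n → ℝ, (∀ X : Fin n → ℝ, h x Y X = 0) → Y = 0) →
        Function.Injective (fderiv ℝ ν x)) := by
  intro x hx
  have hxn : U ∈ nhds x := hU.mem_nhds hx
  have dν : DifferentiableAt ℝ ν x := (hν.contDiffAt hxn).differentiableAt (by simp)
  have dξ : DifferentiableAt ℝ ξ x := (hξ.contDiffAt hxn).differentiableAt (by simp)
  have dDf : DifferentiableAt ℝ (fun z => fderiv ℝ f z) x :=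
    ((hf.contDiffAt hxn).fderiv_right (m := 1) ((by exact WithTop.coe_le_coe.mpr le_top))).differentiableAt one_ne_zero
  -- main pointwise claims
  have main : ∀ Y : Fin n → ℝ,
      fderiv ℝ ν x Y (ξ x) = 0 ∧
      ∀ X : Fin n → ℝ, fderiv ℝ ν x Y (fderiv ℝ f x X) = - h x Y X := by
    intro Y
    constructor
    · -- differentiate ν z (ξ z) = 1
      have heq : (fun z => ν z (ξ z)) =ᶠ[nhds x] fun _ => (1 : ℝ) := by
        filter_upwards [hxn] with z hz using hν1 z hz
      have h0 : fderiv ℝ (fun z => ν z (ξ z)) x = 0 := by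
        rw [heq.fderiv_eq]; exact fderiv_const_apply 1
      have h1 := fderiv_clm_apply dν dξ
      have h2 : ν x (fderiv ℝ ξ x Y) + fderiv ℝ ν x Y (ξ x) = 0 := by
        have := congrArg (fun L => L Y) (h1 ▸ h0)
        simpa using this
      have h3 : ν x (fderiv ℝ ξ x Y) = 0 := by
        rw [SE2 x hx Y, map_neg, hν2 x hx (S x Y)]; ring
      linarith
    · intro X
      have du : DifferentiableAt ℝ (fun z => fderiv ℝ f z X) x :=
        dDf.clm_apply (differentiableAt_const X)
      have heq : (fun z => ν z (fderiv ℝ f z X)) =ᶠ[nhds x] fun _ => (0 : ℝ) := by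
        filter_upwards [hxn] with z hz using hν2 z hz X
      have h0 : fderiv ℝ (fun z => ν z (fderiv ℝ f z X)) x = 0 := by
        rw [heq.fderiv_eq]; exact fderiv_const_apply 0
      have h1 := fderiv_clm_apply dν du
      have h2 : ν x (fderiv ℝ (fun z => fderiv ℝ f z X) x Y)
          + fderiv ℝ ν x Y (fderiv ℝ f x X) = 0 := by
        have := congrArg (fun L => L Y) (h1 ▸ h0)
        simpa using this
      have h3 : ν x (fderiv ℝ (fun z => fderiv ℝ f z X) x Y) = h x Y X := by
        rw [SE1 x hx Y X, map_add, hν2 x hx (Γ x Y X)]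
        simp [hν1 x hx]
      linarith
  refine ⟨main, ?_⟩
  intro hnd
  have : ∀ Y : Fin n → ℝ, fderiv ℝ ν x Y = 0 → Y = 0 := by
    intro Y hY
    refine hnd Y fun X => ?_
    have := (main Y).2 X
    rw [hY] at this
    simpa using this.symm
  intro a b hab
  have : a - b = 0 := this _ (by rw [map_sub, hab, sub_self])
  exact sub_eq_zero.mp this
end

section
/- Let (f, ξ, Γ, h, S) be an equiaffine immersion datum on U with conormal map ν, and set σ := (ξ, ν) : U → ℝ^{n+1} × (ℝ^{n+1})*, with pointwise differential σ⋆(x)(X) := (Dξ(x)(X), Dν(x)(X)). Then for every x ∈ U: (i) ĝ(σ(x), σ(x)) = 1, i.e. σ takes values in the pseudosphere quadric; (ii) for all X, Y ∈ ℝⁿ, ĝ(σ⋆(x)(X), σ⋆(x)(Y)) = (h(x)(X)(S(x)(Y)) + h(x)(Y)(S(x)(X)))/2; (iii) σ is horizontal: ĝ(σ⋆(x)(X), (ξ(x), ν(x))) = 0 and ĝ(σ⋆(x)(X), (ξ(x), −ν(x))) = 0 for all X ∈ ℝⁿ; (iv) if h(x) is nondegenerate then σ⋆(x) is injective (σ is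 an immersion at x). -/
open Matrix

/-- The neutral-signature bilinear form `ĝ((v,φ),(w,ψ)) = (φ(w) + ψ(v))/2` on
`ℝ^{n+1} × (ℝ^{n+1})*`. -/
noncomputable def ghat (n : ℕ)
    (p q : (Fin (n + 1) → ℝ) × ((Fin (n + 1) → ℝ) →L[ℝ] ℝ)) : ℝ :=
  (p.2 q.1 + q.2 p.1) / 2

/-- For an equiaffine immersion datum `(f, ξ, Γ, h, S)` with conormal map
`ν`, the map `σ = (ξ, ν)` takes values in the pseudosphere quadric, its differential pairs
via the dual affine metric, it is horizontal, and it is an immersion where `h` is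
nondegenerate. -/
theorem stmt_1 (n : ℕ) (hn : 1 ≤ n) (U : Set (Fin n → ℝ)) (hU : IsOpen U)
    (f ξ : (Fin n → ℝ) → (Fin (n + 1) → ℝ))
    (Γ : (Fin n → ℝ) → (Fin n → ℝ) →L[ℝ] (Fin n → ℝ) →L[ℝ] (Fin n → ℝ))
    (h : (Fin n → ℝ) → (Fin n → ℝ) →L[ℝ] (Fin n → ℝ) →L[ℝ] ℝ)
    (S : (Fin n → ℝ) → (Fin n → ℝ) →L[ℝ] (Fin n → ℝ))
    (ν : (Fin n → ℝ) → (Fin (n + 1) → ℝ) →L[ℝ] ℝ)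
    (hf : ContDiffOn ℝ (⊤ : ℕ∞) f U) (hξ : ContDiffOn ℝ (⊤ : ℕ∞) ξ U)
    (hΓ : ContDiffOn ℝ (⊤ : ℕ∞) Γ U) (hh : ContDiffOn ℝ (⊤ : ℕ∞) h U)
    (hS : ContDiffOn ℝ (⊤ : ℕ∞) S U) (hν : ContDiffOn ℝ (⊤ : ℕ∞) ν U)
    (SE1 : ∀ x ∈ U, ∀ X Y : Fin n → ℝ,
      fderiv ℝ (fun z => fderiv ℝ f z Y) x X
        = fderiv ℝ f x (Γ x X Y) + h x X Y • ξ x)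
    (SE2 : ∀ x ∈ U, ∀ X : Fin n → ℝ, fderiv ℝ ξ x X = - fderiv ℝ f x (S x X))
    (hν1 : ∀ x ∈ U, ν x (ξ x) = 1)
    (hν2 : ∀ x ∈ U, ∀ Z : Fin n → ℝ, ν x (fderiv ℝ f x Z) = 0) :
    ∀ x ∈ U,
      -- (i) σ takes values in the pseudosphere quadric
      ghat n (ξ x, ν x) (ξ x, ν x) = 1 ∧
      -- (ii) the induced metric
      (∀ X Y : Fin n → ℝ,
        ghat n (fderiv ℝ ξ x X, fderiv ℝ ν x X) (fderiv ℝ ξ x Y, fderiv ℝ ν x Y)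
          = (h x X (S x Y) + h x Y (S x X)) / 2) ∧
      -- (iii) horizontality
      (∀ X : Fin n → ℝ,
        ghat n (fderiv ℝ ξ x X, fderiv ℝ ν x X) (ξ x, ν x) = 0 ∧
        ghat n (fderiv ℝ ξ x X, fderiv ℝ ν x X) (ξ x, -ν x) = 0) ∧
      -- (iv) immersion at nondegenerate points
      ((∀ Y : Fin n → ℝ, (∀ X : Fin n → ℝ, h x Y X = 0) → Y = 0) →
        Function.Injective (fun X : Fin n → ℝ => (fderiv ℝ ξ x X, fderiv ℝ ν x X))) := by
  intro x hx
  have hxn : U ∈ nhds x := hU.mem_nhds hx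
  have hνd : DifferentiableAt ℝ ν x := (hν.contDiffAt hxn).differentiableAt (by simp)
  have hξd : DifferentiableAt ℝ ξ x := (hξ.contDiffAt hxn).differentiableAt (by simp)
  have hdf : ContDiffAt ℝ (⊤ : ℕ∞) (fderiv ℝ f) x := (hf.contDiffAt hxn).fderiv_right (by simp)
  -- Key fact 1: differentiating ν(ξ) = 1
  have K1 : ∀ X : Fin n → ℝ,
      ν x (fderiv ℝ ξ x X) + fderiv ℝ ν x X (ξ x) = 0 := by
    intro X
    have hev : (fun z => ν z (ξ z)) =ᶠ[nhds x] (fun _ => (1 : ℝ)) := by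
      filter_upwards [hxn] with z hz using hν1 z hz
    have h0 : fderiv ℝ (fun z => ν z (ξ z)) x = 0 := by
      rw [hev.fderiv_eq]; exact fderiv_const_apply 1
    have h1 := fderiv_clm_apply hνd hξd
    rw [h0] at h1
    have := congrArg (fun L : (Fin n → ℝ) →L[ℝ] ℝ => L X) h1.symm
    simpa using this
  -- Key fact 2: differentiating ν(Df(Y)) = 0
  have K2 : ∀ X Y : Fin n → ℝ,
      fderiv ℝ ν x X (fderiv ℝ f x Y) = - h x X Y := by
    intro X Y
    have hud : DifferentiableAt ℝ (fun z => fderiv ℝ f z Y) x :=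
      (hdf.differentiableAt (by simp)).clm_apply (differentiableAt_const Y)
    have hev : (fun z => ν z (fderiv ℝ f z Y)) =ᶠ[nhds x] (fun _ => (0 : ℝ)) := by
      filter_upwards [hxn] with z hz using hν2 z hz Y
    have h0 : fderiv ℝ (fun z => ν z (fderiv ℝ f z Y)) x = 0 := by
      rw [hev.fderiv_eq]; exact fderiv_const_apply 0
    have h1 := fderiv_clm_apply hνd hud
    rw [h0] at h1
    have h2 := congrArg (fun L : (Fin n → ℝ) →L[ℝ] ℝ => L X) h1.symm
    simp only [ContinuousLinearMap.zero_apply, ContinuousLinearMap.add_apply,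
      ContinuousLinearMap.comp_apply, ContinuousLinearMap.flip_apply] at h2
    rw [SE1 x hx X Y] at h2
    rw [map_add, _root_.map_smul, hν2 x hx, hν1 x hx] at h2
    have : h x X Y + fderiv ℝ ν x X (fderiv ℝ f x Y) = 0 := by
      simpa using h2
    linarith
  -- ν kills Dξ
  have K3 : ∀ X : Fin n → ℝ, ν x (fderiv ℝ ξ x X) = 0 := by
    intro X
    rw [SE2 x hx X, map_neg, hν2 x hx]
    simp
  have K4 : ∀ X : Fin n → ℝ, fderiv ℝ ν x X (ξ x) = 0 := by
    intro X
    have := K1 X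
    rw [K3 X] at this
    linarith
  -- Dν(X)(Dξ(Y)) = h(X)(S Y)
  have K5 : ∀ X Y : Fin n → ℝ,
      fderiv ℝ ν x X (fderiv ℝ ξ x Y) = h x X (S x Y) := by
    intro X Y
    rw [SE2 x hx Y, map_neg, K2]
    ring
  refine ⟨by simp [ghat, hν1 x hx], ?_, ?_, ?_⟩
  · intro X Y
    simp only [ghat, K5]
  · intro X
    constructor
    · simp only [ghat, K3, K4]; ring
    · simp only [ghat, K4, ContinuousLinearMap.neg_apply, K3]; ring
  · intro hnd X X' heq
    have hp : fderiv ℝ ν x X = fderiv ℝ ν x X' := congrArg Prod.snd heq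
    have hzero : ∀ Y : Fin n → ℝ, h x (X - X') Y = 0 := by
      intro Y
      have h1 : fderiv ℝ ν x X (fderiv ℝ f x Y) = fderiv ℝ ν x X' (fderiv ℝ f x Y) := by
        rw [hp]
      rw [K2, K2] at h1
      have : h x X Y = h x X' Y := by linarith
      simp [map_sub, ContinuousLinearMap.sub_apply, this]
    have := hnd (X - X') hzero
    exact sub_eq_zero.mp this
end

section
/- Let U ⊆ ℝⁿ be open and let f : U → ℝ^{n+1} and ν : U → (ℝ^{n+1})* be differentiable maps with ν(x)(f(x)) = 1 for every x ∈ U. Then for every differentiable function μ : U → ℝ, the rescaled lift F := e^μ · f, Ψ := e^{−μ} · ν satisfies Ψ(x)(F(x)) = 1 and, for all x ∈ U and X, Y ∈ ℝⁿ, (DΨ(x)(X))(DF(x)(Y)) − (DΨ(x)(Y))(DF(x)(X)) = (Dν(x)(X))(Df(x)(Y)) − (Dν(x)(Y))(Df(x)(X)). In particular, the symplectic pairing ω̂(σ_μ⋆X, σ_μ⋆Y) of the differential of σ_μ := (F, Ψ) does not depend on μ, so one lift is φ-anti-invariant (Lagrangian) if and only if all lifts are. -/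
/-!
Differentiating the constraint `ν(f) = 1` gives `(Dν X)(f) = -ν(Df X)`. In the antisymmetrized
pairing of `D(e^{-μ} ν)` and `D(e^μ f)` the factors `e^{±μ}` cancel, the terms with one `Dμ`
cancel against each other by this relation, and the term `(Dμ X)(Dμ Y) ν(f)` is symmetric in
`X, Y`, so it drops out.
-/

open ContinuousLinearMap

section

variable {E F : Type*} [NormedAddCommGroup E] [NormedSpace ℝ E]
  [NormedAddCommGroup F] [NormedSpace ℝ F]

/-- Twice `ω̂(σ⋆X, σ⋆Y)` for a lift `σ = (F, Ψ)` with differentials `F'` and `Ψ'`. -/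
noncomputable def antisymmPairing (Ψ' : E →L[ℝ] F →L[ℝ] ℝ) (F' : E →L[ℝ] F) (X Y : E) : ℝ :=
  Ψ' X (F' Y) - Ψ' Y (F' X)

theorem exp_neg_smul_apply_exp_smul (t : ℝ) (φ : F →L[ℝ] ℝ) (v : F) :
    (Real.exp (-t) • φ) (Real.exp t • v) = φ v := by
  rw [smul_apply, map_smul, smul_smul, ← Real.exp_add, neg_add_cancel, Real.exp_zero, one_smul]

theorem fderiv_apply_add_apply_fderiv_eq_zero {f : E → F} {ν : E → F →L[ℝ] ℝ} {x : E} {c : ℝ}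
    (hf : DifferentiableAt ℝ f x) (hν : DifferentiableAt ℝ ν x)
    (hνf : (fun z => ν z (f z)) =ᶠ[nhds x] fun _ => c) (X : E) :
    fderiv ℝ ν x X (f x) + ν x (fderiv ℝ f x X) = 0 := by
  have h := fderiv_clm_apply hν hf
  rw [hνf.fderiv_eq, fderiv_const_apply] at h
  simpa [add_comm] using (congrArg (fun L => L X) h).symm

theorem fderiv_exp_smul {G : Type*} [NormedAddCommGroup G] [NormedSpace ℝ G]
    {μ : E → ℝ} {g : E → G} {x : E}
    (hμ : DifferentiableAt ℝ μ x) (hg : DifferentiableAt ℝ g x) :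
    fderiv ℝ (fun z => Real.exp (μ z) • g z) x
      = Real.exp (μ x) • (fderiv ℝ g x + (fderiv ℝ μ x).smulRight (g x)) := by
  have h : fderiv ℝ (fun z => Real.exp (μ z) • g z) x
      = Real.exp (μ x) • fderiv ℝ g x + (fderiv ℝ (fun z => Real.exp (μ z)) x).smulRight (g x) :=
    fderiv_smul hμ.exp hg
  rw [h, fderiv_exp hμ, smul_add]
  congr 1
  ext v
  simp only [smulRight_apply, smul_apply, smul_eq_mul, mul_smul]

theorem antisymmPairing_exp_smul {f : E → F} {ν : E → F →L[ℝ] ℝ} {μ : E → ℝ} {x : E}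
    (hf : DifferentiableAt ℝ f x) (hν : DifferentiableAt ℝ ν x) (hμ : DifferentiableAt ℝ μ x)
    (hνf : (fun z => ν z (f z)) =ᶠ[nhds x] fun _ => 1) (X Y : E) :
    antisymmPairing (fderiv ℝ (fun z => Real.exp (-μ z) • ν z) x)
        (fderiv ℝ (fun z => Real.exp (μ z) • f z) x) X Y
      = antisymmPairing (fderiv ℝ ν x) (fderiv ℝ f x) X Y := by
  have hX := fderiv_apply_add_apply_fderiv_eq_zero hf hν hνf X
  have hY := fderiv_apply_add_apply_fderiv_eq_zero hf hν hνf Y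
  have hexp : Real.exp (-μ x) * Real.exp (μ x) = 1 := by
    rw [← Real.exp_add, neg_add_cancel, Real.exp_zero]
  rw [antisymmPairing, antisymmPairing, fderiv_exp_smul hμ hf,
    fderiv_exp_smul (μ := fun z => -μ z) hμ.neg hν, fderiv_fun_neg]
  simp only [smul_apply, add_apply, smulRight_apply, neg_apply, map_smul, map_add,
    smul_eq_mul, hνf.self_of_nhds]
  linear_combination
    (fderiv ℝ ν x X (fderiv ℝ f x Y) - fderiv ℝ ν x Y (fderiv ℝ f x X)) * hexp
      + Real.exp (-μ x) * Real.exp (μ x) * fderiv ℝ μ x Y * hX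
      - Real.exp (-μ x) * Real.exp (μ x) * fderiv ℝ μ x X * hY

end

theorem stmt_3_general (n : ℕ) (U : Set (Fin n → ℝ)) (hU : IsOpen U)
    (f : (Fin n → ℝ) → (Fin (n + 1) → ℝ))
    (ν : (Fin n → ℝ) → (Fin (n + 1) → ℝ) →L[ℝ] ℝ)
    (hf : ∀ x ∈ U, DifferentiableAt ℝ f x)
    (hν : ∀ x ∈ U, DifferentiableAt ℝ ν x)
    (hνf : ∀ x ∈ U, ν x (f x) = 1)
    (μ : (Fin n → ℝ) → ℝ) (hμ : ∀ x ∈ U, DifferentiableAt ℝ μ x) :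
    ∀ x ∈ U,
      (Real.exp (-μ x) • ν x) (Real.exp (μ x) • f x) = 1 ∧
      ∀ X Y : Fin n → ℝ,
        (fderiv ℝ (fun z => Real.exp (-μ z) • ν z) x X)
            (fderiv ℝ (fun z => Real.exp (μ z) • f z) x Y)
          - (fderiv ℝ (fun z => Real.exp (-μ z) • ν z) x Y)
            (fderiv ℝ (fun z => Real.exp (μ z) • f z) x X)
        = (fderiv ℝ ν x X) (fderiv ℝ f x Y) - (fderiv ℝ ν x Y) (fderiv ℝ f x X) := by
  intro x hx
  have hνf_near : (fun z => ν z (f z)) =ᶠ[nhds x] fun _ => 1 :=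
    Filter.eventually_of_mem (hU.mem_nhds hx) hνf
  exact ⟨(exp_neg_smul_apply_exp_smul _ _ _).trans (hνf x hx),
    antisymmPairing_exp_smul (hf x hx) (hν x hx) (hμ x hx) hνf_near⟩

/-- Rescaling a pair `(f, ν)` with `ν(f) = 1` by `e^μ` and `e^{−μ}` keeps
the normalization `Ψ(F) = 1` and does not change the antisymmetrized pairing of the
differentials; hence the symplectic pairing of the differential of the lift `σ_μ = (F, Ψ)`
is independent of `μ`. -/
theorem stmt_3 (n : ℕ) (hn : 1 ≤ n) (U : Set (Fin n → ℝ)) (hU : IsOpen U)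
    (f : (Fin n → ℝ) → (Fin (n + 1) → ℝ))
    (ν : (Fin n → ℝ) → (Fin (n + 1) → ℝ) →L[ℝ] ℝ)
    (hf : ∀ x ∈ U, DifferentiableAt ℝ f x)
    (hν : ∀ x ∈ U, DifferentiableAt ℝ ν x)
    (hνf : ∀ x ∈ U, ν x (f x) = 1)
    (μ : (Fin n → ℝ) → ℝ) (hμ : ∀ x ∈ U, DifferentiableAt ℝ μ x) :
    ∀ x ∈ U,
      (Real.exp (-μ x) • ν x) (Real.exp (μ x) • f x) = 1 ∧
      ∀ X Y : Fin n → ℝ,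
        (fderiv ℝ (fun z => Real.exp (-μ z) • ν z) x X)
            (fderiv ℝ (fun z => Real.exp (μ z) • f z) x Y)
          - (fderiv ℝ (fun z => Real.exp (-μ z) • ν z) x Y)
            (fderiv ℝ (fun z => Real.exp (μ z) • f z) x X)
        = (fderiv ℝ ν x X) (fderiv ℝ f x Y) - (fderiv ℝ ν x Y) (fderiv ℝ f x X) :=
  stmt_3_general n U hU f ν hf hν hνf μ hμ
end

section
/- Let U ⊆ ℝⁿ be open, f : U → ℝ^{n+1} continuously differentiable, and ν : U → (ℝ^{n+1})* twice continuously differentiable, and assume the Lagrangian condition (Dν(x)(X))(Df(x)(Y)) = (Dν(x)(Y))(Df(x)(X)) for all x ∈ U and X, Y ∈ ℝⁿ. Define the 1-form α : U → (ℝⁿ)* by α(x)(X) := (Dν(x)(X))(f(x)). Then α is closed: its Fréchet derivative is symmetric, i.e. (Dα(x)(X))(Y) = (Dα(x)(Y))(X) for all x ∈ U and X, Y ∈ ℝⁿ. -/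
/-!
Write `α y = (Dν y)(·)(f y)`. By the product rule,
`Dα(x)(X)(Y) = D²ν(x)(X)(Y)(f x) + Dν(x)(Y)(Df(x)(X))`.
The first term is symmetric in `X, Y` by Schwarz's theorem, since `ν` is `C²`, and the second
is symmetric by the Lagrangian condition.
-/

open ContinuousLinearMap

/-- The 1-form `α(x)(X) = (Dν(x)(X))(f(x))`, packaged as a continuous linear functional. -/
noncomputable def alphaForm (n : ℕ)
    (f : (Fin n → ℝ) → (Fin (n + 1) → ℝ))
    (ν : (Fin n → ℝ) → (Fin (n + 1) → ℝ) →L[ℝ] ℝ)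
    (x : Fin n → ℝ) : (Fin n → ℝ) →L[ℝ] ℝ :=
  (ContinuousLinearMap.apply ℝ ℝ (f x)).comp (fderiv ℝ ν x)

section

variable {𝕜 E F G : Type*} [NontriviallyNormedField 𝕜]
  [NormedAddCommGroup E] [NormedSpace 𝕜 E] [NormedAddCommGroup F] [NormedSpace 𝕜 F]
  [NormedAddCommGroup G] [NormedSpace 𝕜 G]
  {f : E → F} {ν : E → F →L[𝕜] G} {x : E}

theorem fderiv_apply_comp_fderiv_apply (hf : DifferentiableAt 𝕜 f x)
    (hν : DifferentiableAt 𝕜 (fderiv 𝕜 ν) x) (X Y : E) :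
    fderiv 𝕜 (fun y => (apply 𝕜 G (f y)).comp (fderiv 𝕜 ν y)) x X Y =
      fderiv 𝕜 (fderiv 𝕜 ν) x X Y (f x) + fderiv 𝕜 ν x Y (fderiv 𝕜 f x X) := by
  have happly : HasFDerivAt (fun y => apply 𝕜 G (f y))
      ((apply 𝕜 G : F →L[𝕜] (F →L[𝕜] G) →L[𝕜] G).comp (fderiv 𝕜 f x)) x :=
    HasFDerivAt.comp (g := apply 𝕜 G) x (ContinuousLinearMap.hasFDerivAt _) hf.hasFDerivAt
  rw [(happly.clm_comp hν.hasFDerivAt).fderiv]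
  simp only [add_apply, comp_apply, compL_apply, flip_apply, apply_apply]

theorem fderiv_apply_comp_fderiv_symm (hf : DifferentiableAt 𝕜 f x)
    (hν : DifferentiableAt 𝕜 (fderiv 𝕜 ν) x) (hsymm : IsSymmSndFDerivAt 𝕜 ν x)
    (hLag : ∀ X Y : E, fderiv 𝕜 ν x X (fderiv 𝕜 f x Y) = fderiv 𝕜 ν x Y (fderiv 𝕜 f x X))
    (X Y : E) :
    fderiv 𝕜 (fun y => (apply 𝕜 G (f y)).comp (fderiv 𝕜 ν y)) x X Y =
      fderiv 𝕜 (fun y => (apply 𝕜 G (f y)).comp (fderiv 𝕜 ν y)) x Y X := by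
  rw [fderiv_apply_comp_fderiv_apply hf hν, fderiv_apply_comp_fderiv_apply hf hν, hsymm X Y,
    hLag X Y]

end

theorem stmt_4_general (n : ℕ) (U : Set (Fin n → ℝ)) (hU : IsOpen U)
    (f : (Fin n → ℝ) → (Fin (n + 1) → ℝ))
    (ν : (Fin n → ℝ) → (Fin (n + 1) → ℝ) →L[ℝ] ℝ)
    (hf : ContDiffOn ℝ 1 f U) (hν : ContDiffOn ℝ 2 ν U)
    (hLag : ∀ x ∈ U, ∀ X Y : Fin n → ℝ,
      (fderiv ℝ ν x X) (fderiv ℝ f x Y) = (fderiv ℝ ν x Y) (fderiv ℝ f x X)) :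
    ∀ x ∈ U, ∀ X Y : Fin n → ℝ,
      (fderiv ℝ (alphaForm n f ν) x X) Y = (fderiv ℝ (alphaForm n f ν) x Y) X := by
  intro x hx
  have hν₂ : ContDiffAt ℝ 2 ν x := hν.contDiffAt (hU.mem_nhds hx)
  exact fderiv_apply_comp_fderiv_symm
    ((hf.contDiffAt (hU.mem_nhds hx)).differentiableAt one_ne_zero)
    ((hν₂.fderiv_right one_add_one_eq_two.le).differentiableAt one_ne_zero)
    (hν₂.isSymmSndFDerivAt (by simp)) (hLag x hx)

/-- If `f` is `C¹`, `ν` is `C²`, and the Lagrangian condition holds, then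
the 1-form `α(x)(X) = (Dν(x)(X))(f(x))` is closed: its Fréchet derivative is symmetric. -/
theorem stmt_4 (n : ℕ) (hn : 1 ≤ n) (U : Set (Fin n → ℝ)) (hU : IsOpen U)
    (f : (Fin n → ℝ) → (Fin (n + 1) → ℝ))
    (ν : (Fin n → ℝ) → (Fin (n + 1) → ℝ) →L[ℝ] ℝ)
    (hf : ContDiffOn ℝ 1 f U) (hν : ContDiffOn ℝ 2 ν U)
    (hLag : ∀ x ∈ U, ∀ X Y : Fin n → ℝ,
      (fderiv ℝ ν x X) (fderiv ℝ f x Y) = (fderiv ℝ ν x Y) (fderiv ℝ f x X)) :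
    ∀ x ∈ U, ∀ X Y : Fin n → ℝ,
      (fderiv ℝ (alphaForm n f ν) x X) Y = (fderiv ℝ (alphaForm n f ν) x Y) X :=
  stmt_4_general n U hU f ν hf hν hLag
end

section
/- Let U ⊆ ℝⁿ be a nonempty open convex set, f : U → ℝ^{n+1} and ν : U → (ℝ^{n+1})* twice continuously differentiable maps with ν(x)(f(x)) = 1 for all x ∈ U, satisfying the Lagrangian condition (Dν(x)(X))(Df(x)(Y)) = (Dν(x)(Y))(Df(x)(X)) for all x ∈ U and X, Y ∈ ℝⁿ. Then: (i) there exists a differentiable function μ : U → ℝ with Dμ(x)(X) = (Dν(x)(X))(f(x)) for all x ∈ U and X ∈ ℝⁿ; (ii) any two such functions μ differ by an additive constant; (iii) for any such μ, the maps F := e^μ · f and Ψ := e^{−μ} · ν are dual to each other: Ψ(x)(F(x)) = 1 and Ψ(x)(DF(x)(X)) = 0 for all x ∈ U and X ∈ ℝⁿ. -/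
/-!
Differentiating `ν (f) = 1` gives `ν (Df X) = -(Dν X)(f)`. The 1-form `ω X = (Dν X)(f)` has
derivative `Dω(A)(B) = (D²ν(A)(B))(f) + (Dν B)(Df A)`, which is symmetric in `A, B` by the
symmetry of second derivatives and the Lagrangian condition; so `ω` is closed, and on a convex
set it has a primitive `μ` (Poincaré lemma), unique up to a constant on the connected set `U`.
For `F = e^μ f`, `Ψ = e^{-μ} ν` one gets `Ψ (DF X) = ν (Df X) + Dμ(X) ν (f) = 0`.
-/

open Filter Topology

section

variable {E F : Type*} [NormedAddCommGroup E] [NormedSpace ℝ E] [NormedAddCommGroup F]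
  [NormedSpace ℝ F] {ν : E → F →L[ℝ] ℝ} {f : E → F} {x : E}

noncomputable def pairingForm (ν : E → F →L[ℝ] ℝ) (f : E → F) (x : E) : E →L[ℝ] ℝ :=
  (ContinuousLinearMap.apply ℝ ℝ (f x)).comp (fderiv ℝ ν x)

@[simp]
theorem pairingForm_apply (X : E) : pairingForm ν f x X = fderiv ℝ ν x X (f x) := rfl

theorem differentiableAt_pairingForm (hν : DifferentiableAt ℝ (fderiv ℝ ν) x)
    (hf : DifferentiableAt ℝ f x) : DifferentiableAt ℝ (pairingForm ν f) x := by
  unfold pairingForm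
  fun_prop

theorem fderiv_pairingForm_apply (hν : DifferentiableAt ℝ (fderiv ℝ ν) x)
    (hf : DifferentiableAt ℝ f x) (A B : E) :
    fderiv ℝ (pairingForm ν f) x A B =
      fderiv ℝ (fderiv ℝ ν) x A B (f x) + fderiv ℝ ν x B (fderiv ℝ f x A) := by
  unfold pairingForm
  rw [fderiv_clm_comp (by fun_prop) hν,
    fderiv_fun_comp x (ContinuousLinearMap.apply ℝ ℝ).differentiableAt hf]
  simp

theorem fderiv_pairingForm_symm (hν : ContDiffAt ℝ 2 ν x) (hf : DifferentiableAt ℝ f x)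
    (hLag : ∀ X Y, fderiv ℝ ν x X (fderiv ℝ f x Y) = fderiv ℝ ν x Y (fderiv ℝ f x X))
    (A B : E) : fderiv ℝ (pairingForm ν f) x A B = fderiv ℝ (pairingForm ν f) x B A := by
  have hν' : DifferentiableAt ℝ (fderiv ℝ ν) x :=
    (hν.fderiv_right (m := 1) le_rfl).differentiableAt one_ne_zero
  rw [fderiv_pairingForm_apply hν' hf, fderiv_pairingForm_apply hν' hf, hLag,
    hν.isSymmSndFDerivAt (by simp) A B]

theorem apply_fderiv_eq_neg_pairingForm {c : ℝ} (hν : DifferentiableAt ℝ ν x)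
    (hf : DifferentiableAt ℝ f x) (hνf : (fun y => ν y (f y)) =ᶠ[𝓝 x] fun _ => c) (X : E) :
    ν x (fderiv ℝ f x X) = -pairingForm ν f x X := by
  have h := congrArg (· X) (fderiv_clm_apply hν hf)
  rw [hνf.fderiv_eq, fderiv_fun_const] at h
  simp only [Pi.zero_apply, zero_apply, add_apply, ContinuousLinearMap.coe_comp,
    Function.comp_apply, ContinuousLinearMap.flip_apply] at h
  rw [pairingForm_apply]
  linarith

theorem exp_neg_smul_apply_fderiv_exp_smul (L : F →L[ℝ] ℝ) {μ : E → ℝ}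
    (hμ : DifferentiableAt ℝ μ x) (hf : DifferentiableAt ℝ f x) (X : E) :
    (Real.exp (-μ x) • L) (fderiv ℝ (fun z => Real.exp (μ z) • f z) x X) =
      L (fderiv ℝ f x X) + fderiv ℝ μ x X * L (f x) := by
  have hF : HasFDerivAt (fun z => Real.exp (μ z) • f z)
      (Real.exp (μ x) • fderiv ℝ f x + (Real.exp (μ x) • fderiv ℝ μ x).smulRight (f x)) x :=
    hμ.hasFDerivAt.exp.smul hf.hasFDerivAt
  rw [hF.fderiv]
  simp only [add_apply, smul_apply, ContinuousLinearMap.smulRight_apply, map_add, map_smul,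
    smul_eq_mul]
  have hexp : Real.exp (μ x) * Real.exp (-μ x) = 1 := by
    rw [← Real.exp_add, add_neg_cancel, Real.exp_zero]
  linear_combination (L (fderiv ℝ f x X) + fderiv ℝ μ x X * L (f x)) * hexp

end

theorem stmt_5_general (n : ℕ) (U : Set (Fin n → ℝ)) (hU : IsOpen U)
    (hconv : Convex ℝ U)
    (f : (Fin n → ℝ) → (Fin (n + 1) → ℝ))
    (ν : (Fin n → ℝ) → (Fin (n + 1) → ℝ) →L[ℝ] ℝ)
    (hf : ContDiffOn ℝ 2 f U) (hν : ContDiffOn ℝ 2 ν U)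
    (hνf : ∀ x ∈ U, ν x (f x) = 1)
    (hLag : ∀ x ∈ U, ∀ X Y : Fin n → ℝ,
      (fderiv ℝ ν x X) (fderiv ℝ f x Y) = (fderiv ℝ ν x Y) (fderiv ℝ f x X)) :
    -- (i) existence of a potential μ
    (∃ μ : (Fin n → ℝ) → ℝ, ∀ x ∈ U, DifferentiableAt ℝ μ x ∧
      ∀ X : Fin n → ℝ, fderiv ℝ μ x X = (fderiv ℝ ν x X) (f x)) ∧
    -- (ii) uniqueness up to an additive constant
    (∀ μ₁ μ₂ : (Fin n → ℝ) → ℝ,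
      (∀ x ∈ U, DifferentiableAt ℝ μ₁ x ∧
        ∀ X : Fin n → ℝ, fderiv ℝ μ₁ x X = (fderiv ℝ ν x X) (f x)) →
      (∀ x ∈ U, DifferentiableAt ℝ μ₂ x ∧
        ∀ X : Fin n → ℝ, fderiv ℝ μ₂ x X = (fderiv ℝ ν x X) (f x)) →
      ∃ c : ℝ, ∀ x ∈ U, μ₁ x = μ₂ x + c) ∧
    -- (iii) the rescaled maps are dual to each other
    (∀ μ : (Fin n → ℝ) → ℝ,
      (∀ x ∈ U, DifferentiableAt ℝ μ x ∧
        ∀ X : Fin n → ℝ, fderiv ℝ μ x X = (fderiv ℝ ν x X) (f x)) →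
      ∀ x ∈ U,
        (Real.exp (-μ x) • ν x) (Real.exp (μ x) • f x) = 1 ∧
        ∀ X : Fin n → ℝ,
          (Real.exp (-μ x) • ν x)
            (fderiv ℝ (fun z => Real.exp (μ z) • f z) x X) = 0) := by
  have hν₂ : ∀ x ∈ U, ContDiffAt ℝ 2 ν x := fun x hx => hν.contDiffAt (hU.mem_nhds hx)
  have hf₁ : ∀ x ∈ U, DifferentiableAt ℝ f x := fun x hx =>
    (hf.contDiffAt (hU.mem_nhds hx)).differentiableAt two_ne_zero
  refine ⟨?_, fun μ₁ μ₂ h₁ h₂ => ?_, fun μ hμ x hx => ⟨?_, fun X => ?_⟩⟩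
  · have hω : DifferentiableOn ℝ (pairingForm ν f) U := fun x hx =>
      (differentiableAt_pairingForm
        ((hν₂ x hx).fderiv_right (m := 1) le_rfl |>.differentiableAt one_ne_zero)
        (hf₁ x hx)).differentiableWithinAt
    obtain ⟨μ, hμ⟩ := hconv.exists_forall_hasFDerivAt_of_fderiv_symmetric hU hω
      fun x hx => fderiv_pairingForm_symm (hν₂ x hx) (hf₁ x hx) (hLag x hx)
    exact ⟨μ, fun x hx => ⟨(hμ x hx).differentiableAt, fun X => by rw [(hμ x hx).fderiv]; rfl⟩⟩
  · exact hU.exists_eq_add_of_fderiv_eq hconv.isPreconnected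
      (fun x hx => (h₁ x hx).1.differentiableWithinAt)
      (fun x hx => (h₂ x hx).1.differentiableWithinAt)
      fun x hx => ContinuousLinearMap.ext fun X => ((h₁ x hx).2 X).trans ((h₂ x hx).2 X).symm
  · rw [smul_apply, map_smul, hνf x hx, smul_eq_mul, smul_eq_mul, mul_one, ← Real.exp_add,
      neg_add_cancel, Real.exp_zero]
  · rw [exp_neg_smul_apply_fderiv_exp_smul (ν x) (hμ x hx).1 (hf₁ x hx),
      apply_fderiv_eq_neg_pairingForm ((hν₂ x hx).differentiableAt two_ne_zero) (hf₁ x hx)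
        (eventually_of_mem (hU.mem_nhds hx) hνf),
      (hμ x hx).2, hνf x hx, pairingForm_apply]
    ring

/-- On a nonempty open convex set, the Lagrangian condition yields a
potential `μ` for the 1-form `X ↦ (Dν(x)(X))(f(x))`, unique up to an additive constant,
and the corresponding rescaled lift `(e^μ f, e^{−μ} ν)` is a dual pair. -/
theorem stmt_5 (n : ℕ) (hn : 1 ≤ n) (U : Set (Fin n → ℝ)) (hU : IsOpen U)
    (hne : U.Nonempty) (hconv : Convex ℝ U)
    (f : (Fin n → ℝ) → (Fin (n + 1) → ℝ))
    (ν : (Fin n → ℝ) → (Fin (n + 1) → ℝ) →L[ℝ] ℝ)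
    (hf : ContDiffOn ℝ 2 f U) (hν : ContDiffOn ℝ 2 ν U)
    (hνf : ∀ x ∈ U, ν x (f x) = 1)
    (hLag : ∀ x ∈ U, ∀ X Y : Fin n → ℝ,
      (fderiv ℝ ν x X) (fderiv ℝ f x Y) = (fderiv ℝ ν x Y) (fderiv ℝ f x X)) :
    -- (i) existence of a potential μ
    (∃ μ : (Fin n → ℝ) → ℝ, ∀ x ∈ U, DifferentiableAt ℝ μ x ∧
      ∀ X : Fin n → ℝ, fderiv ℝ μ x X = (fderiv ℝ ν x X) (f x)) ∧
    -- (ii) uniqueness up to an additive constant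
    (∀ μ₁ μ₂ : (Fin n → ℝ) → ℝ,
      (∀ x ∈ U, DifferentiableAt ℝ μ₁ x ∧
        ∀ X : Fin n → ℝ, fderiv ℝ μ₁ x X = (fderiv ℝ ν x X) (f x)) →
      (∀ x ∈ U, DifferentiableAt ℝ μ₂ x ∧
        ∀ X : Fin n → ℝ, fderiv ℝ μ₂ x X = (fderiv ℝ ν x X) (f x)) →
      ∃ c : ℝ, ∀ x ∈ U, μ₁ x = μ₂ x + c) ∧
    -- (iii) the rescaled maps are dual to each other
    (∀ μ : (Fin n → ℝ) → ℝ,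
      (∀ x ∈ U, DifferentiableAt ℝ μ x ∧
        ∀ X : Fin n → ℝ, fderiv ℝ μ x X = (fderiv ℝ ν x X) (f x)) →
      ∀ x ∈ U,
        (Real.exp (-μ x) • ν x) (Real.exp (μ x) • f x) = 1 ∧
        ∀ X : Fin n → ℝ,
          (Real.exp (-μ x) • ν x)
            (fderiv ℝ (fun z => Real.exp (μ z) • f z) x X) = 0) :=
  stmt_5_general n U hU hconv f ν hf hν hνf hLag
end

section
/- Fix n ∈ ℕ and equip 𝕊 := {(x, y) ∈ ℝ^{n+1} × ℝ^{n+1} : x·y = 1} with the subspace topology. Then the ℝ-action t · (x, y) := (e^t x, e^{−t} y) on 𝕊 is proper: the map ℝ × 𝕊 → 𝕊 × 𝕊 sending (t, p) to (t · p, p) is a proper map, i.e. the preimage of every compact set is compact. -/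
open Matrix

/-- The pseudosphere model `𝕊 = {(x, y) ∈ ℝ^{n+1} × ℝ^{n+1} : x·y = 1}`, with the
subspace topology. -/
def PSphere (n : ℕ) : Type :=
  { p : (Fin (n + 1) → ℝ) × (Fin (n + 1) → ℝ) // p.1 ⬝ᵥ p.2 = 1 }

instance (n : ℕ) : TopologicalSpace (PSphere n) :=
  instTopologicalSpaceSubtype

/-- The `ℝ`-action `t · (x, y) = (e^t x, e^{−t} y)` on the pseudosphere. -/
noncomputable def pact (n : ℕ) (t : ℝ) (p : PSphere n) : PSphere n :=
  ⟨(Real.exp t • p.1.1, Real.exp (-t) • p.1.2), by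
    have h := p.2
    rw [smul_dotProduct, dotProduct_smul, smul_eq_mul, smul_eq_mul,
      ← mul_assoc, ← Real.exp_add, add_neg_cancel, Real.exp_zero, one_mul, h]⟩

/-! The map `(t, p) ↦ (t · p, p)` has the continuous left inverse
`(q, p) ↦ (log ‖q.x‖ - log ‖p.x‖, p)`, which is well defined because `x ≠ 0` on `𝕊`.
A continuous map with a continuous left inverse into a Hausdorff space is a closed
embedding, hence proper. -/

namespace PSphere

variable {n : ℕ}

instance : T2Space (PSphere n) :=
  inferInstanceAs (T2Space { p : (Fin (n + 1) → ℝ) × (Fin (n + 1) → ℝ) // p.1 ⬝ᵥ p.2 = 1 })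

lemma fst_ne_zero (p : PSphere n) : p.1.1 ≠ 0 := by
  intro h
  have hp := p.2
  rw [h, zero_dotProduct] at hp
  exact zero_ne_one hp

lemma continuous_pact : Continuous fun tp : ℝ × PSphere n => pact n tp.1 tp.2 := by
  refine Continuous.subtype_mk (Continuous.prodMk ?_ ?_) _
  · exact (Real.continuous_exp.comp continuous_fst).smul
      (continuous_fst.comp (continuous_subtype_val.comp continuous_snd))
  · exact (Real.continuous_exp.comp continuous_fst.neg).smul
      (continuous_snd.comp (continuous_subtype_val.comp continuous_snd))

lemma continuous_log_norm_fst : Continuous fun p : PSphere n => Real.log ‖p.1.1‖ :=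
  (continuous_norm.comp (continuous_fst.comp continuous_subtype_val)).log
    fun p => norm_ne_zero_iff.mpr (fst_ne_zero p)

lemma log_norm_fst_pact (t : ℝ) (p : PSphere n) :
    Real.log ‖(pact n t p).1.1‖ = t + Real.log ‖p.1.1‖ := by
  have hx : ‖p.1.1‖ ≠ 0 := norm_ne_zero_iff.mpr (fst_ne_zero p)
  change Real.log ‖Real.exp t • p.1.1‖ = _
  rw [norm_smul, Real.norm_of_nonneg (Real.exp_pos t).le,
    Real.log_mul (Real.exp_pos t).ne' hx, Real.log_exp]

lemma isClosedEmbedding_pact_prod :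
    Topology.IsClosedEmbedding fun tp : ℝ × PSphere n => (pact n tp.1 tp.2, tp.2) := by
  refine Function.LeftInverse.isClosedEmbedding
    (f := fun q : PSphere n × PSphere n => (Real.log ‖q.1.1.1‖ - Real.log ‖q.2.1.1‖, q.2))
    ?_ ?_ (continuous_pact.prodMk continuous_snd)
  · rintro ⟨t, p⟩
    simp only [log_norm_fst_pact, add_sub_cancel_right]
  · exact ((continuous_log_norm_fst.comp continuous_fst).sub
      (continuous_log_norm_fst.comp continuous_snd)).prodMk continuous_snd

end PSphere

/-- The `ℝ`-action on the pseudosphere is proper: the map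
`(t, p) ↦ (t · p, p)` has compact preimages of compact sets. -/
theorem stmt_13 (n : ℕ) :
    ∀ K : Set (PSphere n × PSphere n), IsCompact K →
      IsCompact ((fun tp : ℝ × PSphere n => (pact n tp.1 tp.2, tp.2)) ⁻¹' K) :=
  fun _ hK => PSphere.isClosedEmbedding_pact_prod.isProperMap.isCompact_preimage hK
end
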